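/- arXiv:2007.06112 — 2 statements merged into one kernel-verified Lean document; each statement's English description precedes it below -/
import Mathlib

section
/- Let Γ be the 2m-by-2m block matrix diag(I_m, -I_m). Let X be a 2m-by-2m complex matrix with no eigenvalue on the closed negative real axis (-infinity, 0], and let R be the principal square root of X, i.e. R² = X and every eigenvalue of R has strictly positive real part. If Γ X Γ = X†, then Γ R Γ = R†. -/
/-!
`S := Γ Rᴴ Γ` is again a square root of `X`: this uses `Γ² = 1` and the symmetry `Γ X Γ = Xᴴ`.
Conjugation by the involution `Γ` preserves the spectrum and `ᴴ` conjugates it, so the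
eigenvalues of `S` also have positive real part. A square root with spectrum in the open right
half-plane is unique, since `R (R - S) = (R - S) (-S)` and `R`, `-S` have disjoint spectra, which
forces `R - S = 0` (Sylvester). Hence `Γ R Γ = Γ S Γ = Rᴴ`.
-/

open Matrix

/-- The grading `Γ = diag(I_m, -I_m)` on `ℂ^(m ⊕ m)`. -/
noncomputable def Gamma (m : ℕ) : Matrix (Fin m ⊕ Fin m) (Fin m ⊕ Fin m) ℂ :=
  Matrix.fromBlocks 1 0 0 (-1)

open Polynomial

namespace Matrix

variable {n p : Type*} [Fintype n] [DecidableEq n] [Fintype p] [DecidableEq p]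

theorem pow_mul_eq_mul_pow {R : Type*} [CommSemiring R] {A : Matrix n n R} {C : Matrix p p R}
    {M : Matrix n p R} (h : A * M = M * C) (k : ℕ) : A ^ k * M = M * C ^ k := by
  induction k with
  | zero => simp
  | succ k ih => rw [pow_succ', Matrix.mul_assoc, ih, ← Matrix.mul_assoc, h, Matrix.mul_assoc,
      ← pow_succ']

theorem aeval_mul_eq_mul_aeval {R : Type*} [CommSemiring R] {A : Matrix n n R}
    {C : Matrix p p R} {M : Matrix n p R} (h : A * M = M * C) (q : R[X]) :
    aeval A q * M = M * aeval C q := by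
  induction q using Polynomial.induction_on' with
  | add q r hq hr => rw [map_add, map_add, Matrix.add_mul, Matrix.mul_add, hq, hr]
  | monomial k a =>
    simp only [aeval_monomial, ← Algebra.smul_def, Matrix.smul_mul, Matrix.mul_smul,
      pow_mul_eq_mul_pow h]

/-- Sylvester's theorem. -/
theorem eq_zero_of_mul_eq_mul_of_disjoint_spectrum {K : Type*} [Field K] [IsAlgClosed K]
    {A : Matrix n n K} {C : Matrix p p K} {M : Matrix n p K} (h : A * M = M * C)
    (hAC : Disjoint (spectrum K A) (spectrum K C)) : M = 0 := by
  cases isEmpty_or_nonempty n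
  · exact Subsingleton.elim _ _
  -- `χ_A(C)` is invertible by spectral mapping, while `M χ_A(C) = χ_A(A) M = 0`.
  have hunit : IsUnit (aeval C A.charpoly) := by
    rw [← spectrum.zero_notMem_iff K, spectrum.map_polynomial_aeval_of_degree_pos C _
      (by rw [charpoly_degree_eq_dim]; exact_mod_cast Fintype.card_pos)]
    rintro ⟨μ, hμC, hμA⟩
    exact hAC.notMem_of_mem_right hμC (mem_spectrum_iff_isRoot_charpoly.2 hμA)
  have hzero : M * aeval C A.charpoly = 0 := by
    rw [← aeval_mul_eq_mul_aeval h, aeval_self_charpoly, Matrix.zero_mul]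
  calc M = M * aeval C A.charpoly * hunit.unit⁻¹.val := by
        rw [Matrix.mul_assoc, hunit.mul_val_inv, Matrix.mul_one]
    _ = 0 := by rw [hzero, Matrix.zero_mul]

theorem eq_of_mul_self_eq_of_re_pos {R S : Matrix n n ℂ} (hRS : R * R = S * S)
    (hR : ∀ z ∈ spectrum ℂ R, 0 < z.re) (hS : ∀ z ∈ spectrum ℂ S, 0 < z.re) : R = S := by
  have hsemiconj : R * (R - S) = (R - S) * -S := by
    rw [Matrix.mul_sub, hRS, Matrix.sub_mul, Matrix.mul_neg, Matrix.mul_neg, sub_neg_eq_add,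
      sub_eq_neg_add, add_comm]
  have hdisj : Disjoint (spectrum ℂ R) (spectrum ℂ (-S)) := by
    rw [← spectrum.neg_eq, Set.disjoint_left]
    intro z hzR hzS
    have := hS (-z) hzS
    rw [Complex.neg_re] at this
    linarith [hR z hzR]
  exact sub_eq_zero.1 (eq_zero_of_mul_eq_mul_of_disjoint_spectrum hsemiconj hdisj)

theorem mem_spectrum_conjTranspose_iff {R : Type*} [CommRing R] [StarRing R] {M : Matrix n n R}
    {z : R} : z ∈ spectrum R Mᴴ ↔ star z ∈ spectrum R M := by
  rw [← star_eq_conjTranspose, spectrum.map_star, Set.mem_star]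

end Matrix

theorem spectrum_mul_mul_of_mul_self_eq_one {R A : Type*} [CommSemiring R] [Ring A] [Algebra R A]
    {g : A} (hg : g * g = 1) (a : A) : spectrum R (g * a * g) = spectrum R a :=
  spectrum.units_conjugate (u := ⟨g, g, hg, hg⟩)

theorem Gamma_mul_self (m : ℕ) : Gamma m * Gamma m = 1 := by
  simp [Gamma, fromBlocks_multiply, ← fromBlocks_one]

theorem principal_sqrt_of_chiral_is_chiral_general
    (m : ℕ) (X R : Matrix (Fin m ⊕ Fin m) (Fin m ⊕ Fin m) ℂ)
    (hsq : R * R = X)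
    (hre : ∀ z ∈ spectrum ℂ R, 0 < z.re)
    (hchiral : Gamma m * X * Gamma m = Xᴴ) :
    Gamma m * R * Gamma m = Rᴴ := by
  set Γ := Gamma m
  have hΓ : Γ * Γ = 1 := Gamma_mul_self m
  have hsq' : Γ * Rᴴ * Γ * (Γ * Rᴴ * Γ) = X := by
    calc Γ * Rᴴ * Γ * (Γ * Rᴴ * Γ) = Γ * (R * R)ᴴ * Γ := by
          simp only [conjTranspose_mul, Matrix.mul_assoc, ← Matrix.mul_assoc Γ Γ, hΓ,
            Matrix.one_mul]
      _ = X := by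
          simp only [hsq, ← hchiral, Matrix.mul_assoc, ← Matrix.mul_assoc Γ Γ, hΓ,
            Matrix.one_mul, Matrix.mul_one]
  have hre' : ∀ z ∈ spectrum ℂ (Γ * Rᴴ * Γ), 0 < z.re := by
    intro z hz
    rw [spectrum_mul_mul_of_mul_self_eq_one hΓ, mem_spectrum_conjTranspose_iff] at hz
    simpa using hre _ hz
  have hR : R = Γ * Rᴴ * Γ := eq_of_mul_self_eq_of_re_pos (hsq.trans hsq'.symm) hre hre'
  calc Γ * R * Γ = Γ * (Γ * Rᴴ * Γ) * Γ := congrArg (Γ * · * Γ) hR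
    _ = Rᴴ := by
        simp only [Matrix.mul_assoc, ← Matrix.mul_assoc Γ Γ, hΓ, Matrix.one_mul, Matrix.mul_one]

/-- If `X` satisfies the chiral symmetry `Γ X Γ = Xᴴ` with no eigenvalue on
`(-∞, 0]`, and `R` is its principal square root, then `Γ R Γ = Rᴴ`. -/
theorem principal_sqrt_of_chiral_is_chiral
    (m : ℕ) (X R : Matrix (Fin m ⊕ Fin m) (Fin m ⊕ Fin m) ℂ)
    (hspec : ∀ z ∈ spectrum ℂ X, ¬ (z.im = 0 ∧ z.re ≤ 0))
    (hsq : R * R = X)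
    (hre : ∀ z ∈ spectrum ℂ R, 0 < z.re)
    (hchiral : Gamma m * X * Gamma m = Xᴴ) :
    Gamma m * R * Gamma m = Rᴴ :=
  principal_sqrt_of_chiral_is_chiral_general m X R hsq hre hchiral
end

section
/- Let N = 2m and let Z be the N-by-N block matrix [[0, I_m], [-I_m, 0]], and for an N-by-N complex matrix X define its dual X^♯ = -Z Xᵀ Z. Suppose U is an N-by-N unitary matrix that is self-dual, i.e. U^♯ = U. Then there exists an N-by-N Hermitian matrix H that is self-dual (H^♯ = H) such that exp(-iH) = U. -/
/-!
Take `H = -arg U` by the continuous functional calculus, so that `exp (-iH) = U` because the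
spectrum of `U` lies on the unit circle, and `H` is Hermitian because `arg` is real. As the spectrum
is finite, `H` is a polynomial in `U`; the dual is a linear anti-automorphism, so it fixes every
polynomial in the self-dual matrix `U`.
-/

open Matrix

/-- The matrix `Z = [[0, I], [-I, 0]]` on `ℂ^(m ⊕ m)`. -/
noncomputable def Zmat (m : ℕ) : Matrix (Fin m ⊕ Fin m) (Fin m ⊕ Fin m) ℂ :=
  Matrix.fromBlocks 0 1 (-1) 0

/-- The dual `X^♯ = -Z Xᵀ Z` of a `2m × 2m` complex matrix. -/
noncomputable def dual {m : ℕ} (X : Matrix (Fin m ⊕ Fin m) (Fin m ⊕ Fin m) ℂ) :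
    Matrix (Fin m ⊕ Fin m) (Fin m ⊕ Fin m) ℂ :=
  -(Zmat m * Xᵀ * Zmat m)

open Polynomial

section Dual

variable {m : ℕ}

theorem Zmat_mul_self (m : ℕ) : Zmat m * Zmat m = -1 := by
  simp [Zmat, fromBlocks_multiply, fromBlocks_neg, ← fromBlocks_one]

theorem dual_one : dual (1 : Matrix (Fin m ⊕ Fin m) (Fin m ⊕ Fin m) ℂ) = 1 := by
  simp [dual, Zmat_mul_self]

theorem dual_add (X Y : Matrix (Fin m ⊕ Fin m) (Fin m ⊕ Fin m) ℂ) :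
    dual (X + Y) = dual X + dual Y := by
  simp only [dual, transpose_add, Matrix.add_mul, Matrix.mul_add, neg_add]

theorem dual_smul (c : ℂ) (X : Matrix (Fin m ⊕ Fin m) (Fin m ⊕ Fin m) ℂ) :
    dual (c • X) = c • dual X := by
  simp [dual, transpose_smul]

theorem dual_mul (X Y : Matrix (Fin m ⊕ Fin m) (Fin m ⊕ Fin m) ℂ) :
    dual (X * Y) = dual Y * dual X := by
  have hZ : ∀ A : Matrix (Fin m ⊕ Fin m) (Fin m ⊕ Fin m) ℂ, Zmat m * (Zmat m * A) = -A := by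
    intro A
    rw [← Matrix.mul_assoc, Zmat_mul_self, neg_one_mul]
  simp only [dual, transpose_mul, neg_mul_neg, Matrix.mul_assoc, hZ, Matrix.mul_neg]

theorem dual_pow (X : Matrix (Fin m ⊕ Fin m) (Fin m ⊕ Fin m) ℂ) (k : ℕ) :
    dual (X ^ k) = dual X ^ k := by
  induction k with
  | zero => simpa using dual_one
  | succ k ih => rw [pow_succ, dual_mul, ih, pow_succ']

theorem dual_aeval (X : Matrix (Fin m ⊕ Fin m) (Fin m ⊕ Fin m) ℂ) (q : ℂ[X]) :
    dual (aeval X q) = aeval (dual X) q := by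
  induction q using Polynomial.induction_on' with
  | add p q hp hq => rw [map_add, map_add, dual_add, hp, hq]
  | monomial n c => simp only [aeval_monomial, ← Algebra.smul_def, dual_smul, dual_pow]

end Dual

section FunctionalCalculus

open Complex

-- On a finite spectrum, `f` agrees with its Lagrange interpolation polynomial.
theorem exists_cfc_eq_aeval_of_finite_spectrum {R A : Type*} {p : A → Prop} [Field R]
    [StarRing R] [MetricSpace R] [IsTopologicalSemiring R] [ContinuousStar R]
    [TopologicalSpace A] [Ring A] [StarRing A] [Algebra R A]
    [ContinuousFunctionalCalculus R A p] {a : A} (hfin : (spectrum R a).Finite) (f : R → R) :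
    ∃ q : R[X], cfc f a = aeval a q := by
  classical
  by_cases ha : p a
  · refine ⟨Lagrange.interpolate hfin.toFinset id f, ?_⟩
    rw [← cfc_polynomial _ a]
    refine cfc_congr fun z hz => ?_
    exact (Lagrange.eval_interpolate_at_node f Function.injective_id.injOn
      (hfin.mem_toFinset.mpr hz)).symm
  · exact ⟨0, by rw [cfc_apply_of_not_predicate a ha, map_zero]⟩

variable {A : Type*} [CStarAlgebra A] {u : A}

-- `exp (i arg z) = z` on the unit circle, which contains the spectrum of `u`.
theorem exp_cfc_I_mul_arg (hu : u ∈ unitary A) (hfin : (spectrum ℂ u).Finite) :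
    NormedSpace.exp (cfc (fun z => I * (arg z : ℂ)) u) = u := by
  have := isStarNormal_of_mem_unitary hu
  rw [← CFC.complex_exp_eq_normedSpace_exp, ← cfc_comp' _ _ u
    continuous_exp.continuousOn (hfin.continuousOn _)]
  conv_rhs => rw [← cfc_id' ℂ u]
  refine cfc_congr fun z hz => ?_
  have hz1 : ‖z‖ = 1 := by simpa using spectrum.subset_circle_of_unitary hu hz
  simpa [hz1, mul_comm] using norm_mul_exp_arg_mul_I z

theorem exists_isSelfAdjoint_aeval_log_of_mem_unitary (hu : u ∈ unitary A)
    (hfin : (spectrum ℂ u).Finite) :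
    ∃ q : ℂ[X], IsSelfAdjoint (aeval u q) ∧ NormedSpace.exp (-(I • aeval u q)) = u := by
  have := isStarNormal_of_mem_unitary hu
  obtain ⟨q, hq⟩ := exists_cfc_eq_aeval_of_finite_spectrum hfin fun z => -(arg z : ℂ)
  refine ⟨q, ?_, ?_⟩
  · rw [← hq, IsSelfAdjoint, ← cfc_star]
    simp
  · rw [← hq, ← cfc_smul I _ u (hfin.continuousOn _), ← cfc_neg]
    simpa [smul_eq_mul] using exp_cfc_I_mul_arg hu hfin

end FunctionalCalculus

/-- Every self-dual unitary `U` has a logarithm of the form `-iH` with `H`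
Hermitian and self-dual: `exp(-iH) = U`. -/
theorem selfDual_unitary_has_selfDual_hermitian_log
    (m : ℕ) (U : Matrix (Fin m ⊕ Fin m) (Fin m ⊕ Fin m) ℂ)
    (hU : Uᴴ * U = 1) (hdual : dual U = U) :
    ∃ H : Matrix (Fin m ⊕ Fin m) (Fin m ⊕ Fin m) ℂ,
      Hᴴ = H ∧ dual H = H ∧
      NormedSpace.exp (-(Complex.I • H)) = U := by
  have hUu : U ∈ unitary _ := mem_unitaryGroup_iff'.mpr hU
  open scoped Matrix.Norms.L2Operator in
  obtain ⟨q, hself, hexp⟩ :=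
    exists_isSelfAdjoint_aeval_log_of_mem_unitary hUu (finite_spectrum U)
  exact ⟨aeval U q, hself, by rw [dual_aeval, hdual], hexp⟩
end
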